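/- For every real m > 1 and every real z > 2m/(m−1), ∫ f_{fT}(x;m)/(z−x) dx = ((m+1)z − √((m−1)²z² − 4m²)) / (2(m+z²)), where the square root is the nonnegative real square root (the radicand is positive for z > 2m/(m−1)). -/

import Mathlib

open MeasureTheory Real

/-- Density of the free T-distribution of parameter `m`. -/
noncomputable def fTDensity (m : ℝ) : ℝ → ℝ :=
  Set.indicator (Set.Icc (-(2 * m / (m - 1))) (2 * m / (m - 1)))
    (fun x => Real.sqrt (4 - ((m - 1) / m) ^ 2 * x ^ 2) / (2 * π * (1 + x ^ 2 / m)))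

/-- The antiderivative of the Cauchy-transform integrand of the free T density. -/
noncomputable def fTAnti (m z a B x : ℝ) : ℝ :=
  m/(m+z^2)/(2*π) *
    (Real.sqrt (a^2*z^2-4) * Real.arcsin ((4 - a^2*z*x)/(2*a*(z-x)))
     + -(B/2) * (Real.log (B + Real.sqrt (4 - a^2*x^2))
        - Real.log (B - Real.sqrt (4 - a^2*x^2)))
     + z*B/Real.sqrt m * Real.arcsin (B*x/(2*Real.sqrt (x^2+m))))

lemma sqrt_deriv_aux (a x : ℝ) (hx4 : 0 < 4 - a^2*x^2) :
    HasDerivAt (fun y : ℝ => Real.sqrt (4 - a^2*y^2)) (-(a^2*x)/Real.sqrt (4 - a^2*x^2)) x := by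
  have hinner : HasDerivAt (fun y : ℝ => 4 - a^2*y^2) (-(a^2*(2*x))) x := by
    simpa using ((hasDerivAt_pow 2 x).const_mul (a^2)).const_sub 4
  have := (Real.hasDerivAt_sqrt (ne_of_gt hx4)).comp x hinner
  refine this.congr_deriv ?_
  symm
  have hs0 : Real.sqrt (4 - a^2*x^2) ≠ 0 := ne_of_gt (Real.sqrt_pos.2 hx4)
  field_simp

lemma t1_deriv (a z x : ℝ) (ha : 0 < a) (hzx : 0 < z - x) (hx4 : 0 < 4 - a^2*x^2)
    (haz : 2 < a*z) :
    HasDerivAt (fun y : ℝ => Real.sqrt (a^2*z^2-4) * Real.arcsin ((4 - a^2*z*y)/(2*a*(z-y))))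
      (-(a^2*z^2-4)/(Real.sqrt (4-a^2*x^2)*(z-x))) x := by
  set s := Real.sqrt (4-a^2*x^2) with hsdef
  set D := Real.sqrt (a^2*z^2-4) with hDdef
  have hD4 : 0 < a^2*z^2 - 4 := by nlinarith
  have hs0 : 0 < s := Real.sqrt_pos.2 hx4
  have hD0 : 0 < D := Real.sqrt_pos.2 hD4
  have hs2 : s^2 = 4 - a^2*x^2 := Real.sq_sqrt hx4.le
  have hD2 : D^2 = a^2*z^2 - 4 := Real.sq_sqrt hD4.le
  have hden : (2*a*(z-x)) ≠ 0 := by positivity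
  have hnum : HasDerivAt (fun y : ℝ => 4 - a^2*z*y) (-(a^2*z)) x := by
    simpa using ((hasDerivAt_id x).const_mul (a^2*z)).const_sub 4
  have hgden : HasDerivAt (fun y : ℝ => 2*a*(z-y)) (2*a*(-1)) x := by
    simpa using ((hasDerivAt_id x).const_sub z).const_mul (2*a)
  have hu1 := hnum.div hgden hden
  have h1u : 1 - ((4 - a^2*z*x)/(2*a*(z-x)))^2 = (D*s/(2*a*(z-x)))^2 := by
    have e1 : (D*s/(2*a*(z-x)))^2 = D^2*s^2/(2*a*(z-x))^2 := by
      rw [div_pow, mul_pow]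
    rw [e1, hD2, hs2, eq_div_iff (pow_ne_zero 2 hden), sub_mul, div_pow,
      div_mul_cancel₀ _ (pow_ne_zero 2 hden)]
    ring
  have hspos : (0:ℝ) < D*s/(2*a*(z-x)) := by positivity
  have hu2 : ((4 - a^2*z*x)/(2*a*(z-x)))^2 < 1 := by nlinarith [sq_nonneg (D*s/(2*a*(z-x)))]
  have hne1 : (4 - a^2*z*x)/(2*a*(z-x)) ≠ -1 := by
    intro h; rw [h] at hu2; norm_num at hu2
  have hne2 : (4 - a^2*z*x)/(2*a*(z-x)) ≠ 1 := by
    intro h; rw [h] at hu2; norm_num at hu2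
  have harc := ((Real.hasDerivAt_arcsin hne1 hne2).comp x hu1).const_mul D
  refine harc.congr_deriv ?_
  symm
  rw [h1u, Real.sqrt_sq hspos.le]
  field_simp
  ring

lemma t2_deriv (m a B x : ℝ) (hm : 1 < m) (ha' : a = (m-1)/m) (hB' : B = (m+1)/Real.sqrt m)
    (hx4 : 0 < 4 - a^2*x^2) :
    HasDerivAt (fun y : ℝ => -(B/2) * (Real.log (B + Real.sqrt (4 - a^2*y^2))
        - Real.log (B - Real.sqrt (4 - a^2*y^2))))
      (B^2*x/(Real.sqrt (4-a^2*x^2)*(m+x^2))) x := by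
  set s := Real.sqrt (4-a^2*x^2) with hsdef
  have hm0 : (0:ℝ) < m := by linarith
  have hs0 : 0 < s := Real.sqrt_pos.2 hx4
  have hs2 : s^2 = 4 - a^2*x^2 := Real.sq_sqrt hx4.le
  have hsm : (0:ℝ) < Real.sqrt m := Real.sqrt_pos.2 hm0
  have hsm2 : (Real.sqrt m)^2 = m := Real.sq_sqrt hm0.le
  have hB2 : B^2 = (m+1)^2/m := by rw [hB', div_pow, hsm2]
  have hB0 : 0 < B := by rw [hB']; positivity
  have hB2' : B^2 * m = (m+1)^2 := by rw [hB2]; field_simp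
  have hm1sq : 0 < (m-1)^2 := pow_pos (by linarith) 2
  have h4B : 4 < B^2 := by nlinarith [hB2', hm1sq]
  have hBgt : 2 < B := by nlinarith [h4B, hB0]
  have hsle : s ≤ 2 := by
    rw [hsdef, show (2:ℝ) = Real.sqrt 4 by rw [show (4:ℝ) = 2^2 by norm_num, Real.sqrt_sq]; norm_num]
    exact Real.sqrt_le_sqrt (by nlinarith)
  have hBs1 : 0 < B + s := by linarith
  have hBs2 : 0 < B - s := by linarith
  have hds := sqrt_deriv_aux a x hx4
  have hl1 := (Real.hasDerivAt_log (ne_of_gt hBs1)).comp x (hds.const_add B)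
  have hl2 := (Real.hasDerivAt_log (ne_of_gt hBs2)).comp x (hds.const_sub B)
  have htot := (hl1.sub hl2).const_mul (-(B/2))
  refine htot.congr_deriv ?_
  symm
  have hBsq : B^2 - s^2 = a^2*(m+x^2) := by
    rw [hB2, hs2, ha']; field_simp; ring
  have hmx : (0:ℝ) < m + x^2 := by positivity
  have ha0 : a ≠ 0 := by
    intro h
    rw [h] at hBsq
    nlinarith [hBsq]
  rw [← hsdef]
  field_simp
  linear_combination (2*B*x) * hBsq

lemma t3_deriv (m z a B x : ℝ) (hm : 1 < m) (ha' : a = (m-1)/m) (hB' : B = (m+1)/Real.sqrt m)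
    (hx4 : 0 < 4 - a^2*x^2) :
    HasDerivAt (fun y : ℝ => z*B/Real.sqrt m * Real.arcsin (B*y/(2*Real.sqrt (y^2+m))))
      (z*B^2/(Real.sqrt (4-a^2*x^2)*(m+x^2))) x := by
  set s := Real.sqrt (4-a^2*x^2) with hsdef
  have hm0 : (0:ℝ) < m := by linarith
  have hs0 : 0 < s := Real.sqrt_pos.2 hx4
  have hs2 : s^2 = 4 - a^2*x^2 := Real.sq_sqrt hx4.le
  have hsm : (0:ℝ) < Real.sqrt m := Real.sqrt_pos.2 hm0
  have hsm2 : (Real.sqrt m)^2 = m := Real.sq_sqrt hm0.le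
  have hB2 : B^2 = (m+1)^2/m := by rw [hB', div_pow, hsm2]
  have hB2' : B^2 * m = (m+1)^2 := by rw [hB2]; field_simp
  have hB0 : 0 < B := by rw [hB']; positivity
  have hxm : (0:ℝ) < x^2 + m := by positivity
  have hsxm : 0 < Real.sqrt (x^2+m) := Real.sqrt_pos.2 hxm
  have hsxm2 : (Real.sqrt (x^2+m))^2 = x^2 + m := Real.sq_sqrt hxm.le
  have hsq3 : HasDerivAt (fun y : ℝ => Real.sqrt (y^2+m)) (x/Real.sqrt (x^2+m)) x := by
    have hinner : HasDerivAt (fun y : ℝ => y^2 + m) (2*x) x := by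
      simpa using (hasDerivAt_pow 2 x).add_const m
    have := (Real.hasDerivAt_sqrt (ne_of_gt hxm)).comp x hinner
    refine this.congr_deriv ?_
    symm
    field_simp
  have hden : 2*Real.sqrt (x^2+m) ≠ 0 := by positivity
  have hnum : HasDerivAt (fun y : ℝ => B*y) B x := by
    simpa using (hasDerivAt_id x).const_mul B
  have hu3 := hnum.div (hsq3.const_mul 2) hden
  have h1u : 1 - (B*x/(2*Real.sqrt (x^2+m)))^2 = (Real.sqrt m * s/(2*Real.sqrt (x^2+m)))^2 := by
    have e1 : (Real.sqrt m * s/(2*Real.sqrt (x^2+m)))^2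
        = (Real.sqrt m)^2*s^2/(2*Real.sqrt (x^2+m))^2 := by
      rw [div_pow, mul_pow]
    have e2 : (B*x/(2*Real.sqrt (x^2+m)))^2 = B^2*x^2/(2*Real.sqrt (x^2+m))^2 := by
      rw [div_pow, mul_pow]
    have e3 : (2*Real.sqrt (x^2+m))^2 = 4*(x^2+m) := by
      rw [mul_pow, hsxm2]; norm_num
    rw [e1, e2, e3, hsm2, hs2, eq_div_iff (by positivity : (4:ℝ)*(x^2+m) ≠ 0), sub_mul,
      div_mul_cancel₀ _ (by positivity : (4:ℝ)*(x^2+m) ≠ 0), hB2, ha']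
    field_simp
    ring
  have hspos : (0:ℝ) < Real.sqrt m * s/(2*Real.sqrt (x^2+m)) := by positivity
  have hu2 : (B*x/(2*Real.sqrt (x^2+m)))^2 < 1 := by
    nlinarith [sq_nonneg (Real.sqrt m * s/(2*Real.sqrt (x^2+m)))]
  have hne1 : B*x/(2*Real.sqrt (x^2+m)) ≠ -1 := by
    intro h; rw [h] at hu2; norm_num at hu2
  have hne2 : B*x/(2*Real.sqrt (x^2+m)) ≠ 1 := by
    intro h; rw [h] at hu2; norm_num at hu2
  have harc := ((Real.hasDerivAt_arcsin hne1 hne2).comp x hu3).const_mul (z*B/Real.sqrt m)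
  refine harc.congr_deriv ?_
  symm
  rw [h1u, Real.sqrt_sq hspos.le]
  field_simp
  linear_combination (z*(Real.sqrt (x^2+m))^2) * hsm2
    - (z*x^2) * hsxm2

lemma fTAnti_hasDerivAt (m z a B x : ℝ) (hm : 1 < m) (ha' : a = (m-1)/m)
    (hB' : B = (m+1)/Real.sqrt m) (hzx : 0 < z - x) (hx4 : 0 < 4 - a^2*x^2) (haz : 2 < a*z) :
    HasDerivAt (fTAnti m z a B)
      (Real.sqrt (4 - a^2*x^2) / (2*π*(1 + x^2/m)) / (z - x)) x := by
  have hm0 : (0:ℝ) < m := by linarith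
  have ha : 0 < a := by rw [ha']; exact div_pos (by linarith) hm0
  have h1 := t1_deriv a z x ha hzx hx4 haz
  have h2 := t2_deriv m a B x hm ha' hB' hx4
  have h3 := t3_deriv m z a B x hm ha' hB' hx4
  have htot := ((h1.add h2).add h3).const_mul (m/(m+z^2)/(2*π))
  have heq : fTAnti m z a B = fun y => m/(m+z^2)/(2*π) *
      ((Real.sqrt (a^2*z^2-4) * Real.arcsin ((4 - a^2*z*y)/(2*a*(z-y)))
       + -(B/2) * (Real.log (B + Real.sqrt (4 - a^2*y^2))
          - Real.log (B - Real.sqrt (4 - a^2*y^2))))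
       + z*B/Real.sqrt m * Real.arcsin (B*y/(2*Real.sqrt (y^2+m)))) := by
    funext y
    unfold fTAnti
    ring
  rw [heq]
  refine htot.congr_deriv ?_
  symm
  set s := Real.sqrt (4-a^2*x^2) with hsdef
  have hs0 : 0 < s := Real.sqrt_pos.2 hx4
  have hs2 : s^2 = 4 - a^2*x^2 := Real.sq_sqrt hx4.le
  have hsm : (0:ℝ) < Real.sqrt m := Real.sqrt_pos.2 hm0
  have hsm2 : (Real.sqrt m)^2 = m := Real.sq_sqrt hm0.le
  have hB2 : B^2 = (m+1)^2/m := by rw [hB', div_pow, hsm2]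
  have hmx : (0:ℝ) < m + x^2 := by positivity
  have hmz : (0:ℝ) < m + z^2 := by positivity
  have hpi : π ≠ 0 := Real.pi_ne_zero
  have hzx' : z - x ≠ 0 := ne_of_gt hzx
  have e : -(a^2*z^2-4)/(s*(z-x)) + B^2*x/(s*(m+x^2)) + z*B^2/(s*(m+x^2))
      = ((4-a^2*z^2)*(m+x^2) + B^2*(x+z)*(z-x)) / (s*(z-x)*(m+x^2)) := by
    field_simp
    ring
  have e2 : (4-a^2*z^2)*(m+x^2) + B^2*(x+z)*(z-x) = s^2*(m+z^2) := by
    rw [hs2, hB2, ha']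
    field_simp
    ring
  rw [e, e2]
  have h1x : 1 + x^2/m = (m+x^2)/m := by field_simp
  rw [h1x]
  field_simp

lemma fTAnti_boundary (m z a B L : ℝ) (hm : 1 < m) (ha : 0 < a) (hB0 : 0 < B)
    (haL : a*L = 2) (hL0 : 0 < L) (hzL : L < z)
    (hBL : L^2 + m = (B*L/2)^2) :
    fTAnti m z a B L - fTAnti m z a B (-L)
      = m/(m+z^2)/(2*π) * (π*(z*B/Real.sqrt m) - π*Real.sqrt (a^2*z^2-4)) := by
  have hzL0 : 0 < z - L := by linarith
  have hzLn : 0 < z + L := by linarith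
  have hsL : Real.sqrt (4 - a^2*L^2) = 0 := by
    rw [show (4:ℝ) - a^2*L^2 = 0 by nlinarith [haL]]; exact Real.sqrt_zero
  have hu1L : (4 - a^2*z*L)/(2*a*(z-L)) = -1 := by
    rw [div_eq_iff (by positivity : 2*a*(z-L) ≠ 0)]
    linear_combination (-(2+a*z))*haL
  have hu1Ln : (4 - a^2*z*(-L))/(2*a*(z-(-L))) = 1 := by
    rw [div_eq_iff (ne_of_gt (mul_pos (by positivity : (0:ℝ) < 2*a) (by linarith : (0:ℝ) < z-(-L))))]
    linear_combination (a*z-2)*haL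
  have hsqL : Real.sqrt (L^2+m) = B*L/2 := by
    rw [hBL, Real.sqrt_sq (by positivity)]
  have hu3L : B*L/(2*Real.sqrt (L^2+m)) = 1 := by
    rw [hsqL]; field_simp
  have hu3Ln : B*(-L)/(2*Real.sqrt ((-L)^2+m)) = -1 := by
    rw [show ((-L):ℝ)^2+m = L^2+m by ring, hsqL]; field_simp
  unfold fTAnti
  rw [show (4:ℝ) - a^2*(-L)^2 = 4 - a^2*L^2 by ring, hsL, hu1L, hu1Ln, hu3L, hu3Ln,
    Real.arcsin_one, Real.arcsin_neg_one, add_zero, sub_zero, sub_self]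
  ring

lemma fTAnti_continuousOn (m z a B L : ℝ) (hm : 1 < m) (ha : 0 < a) (hB : 2 < B)
    (hzL : L < z) :
    ContinuousOn (fTAnti m z a B) (Set.Icc (-L) L) := by
  have hm0 : (0:ℝ) < m := by linarith
  have hsle : ∀ x : ℝ, Real.sqrt (4 - a^2*x^2) ≤ 2 := by
    intro x
    rw [show (2:ℝ) = Real.sqrt 4 by
      rw [show (4:ℝ) = 2^2 by norm_num, Real.sqrt_sq]; norm_num]
    exact Real.sqrt_le_sqrt (by nlinarith)
  have hscont : Continuous (fun x : ℝ => Real.sqrt (4 - a^2*x^2)) :=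
    Real.continuous_sqrt.comp (by continuity)
  unfold fTAnti
  apply ContinuousOn.mul continuousOn_const
  apply ContinuousOn.add
  apply ContinuousOn.add
  · apply ContinuousOn.mul continuousOn_const
    apply Real.continuous_arcsin.comp_continuousOn
    apply ContinuousOn.div (by fun_prop) (by fun_prop)
    intro x hx
    have hxz : 0 < z - x := by linarith [hx.2]
    exact ne_of_gt (mul_pos (by positivity) hxz)
  · apply ContinuousOn.mul continuousOn_const
    apply ContinuousOn.sub
    · apply ContinuousOn.log ((continuous_const.add hscont).continuousOn)
      intro x _
      have := Real.sqrt_nonneg (4 - a^2*x^2)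
      exact ne_of_gt (by show 0 < B + Real.sqrt (4 - a^2*x^2); linarith)
    · apply ContinuousOn.log ((continuous_const.sub hscont).continuousOn)
      intro x _
      have := hsle x
      exact ne_of_gt (by show 0 < B - Real.sqrt (4 - a^2*x^2); linarith)
  · apply ContinuousOn.mul continuousOn_const
    apply Real.continuous_arcsin.comp_continuousOn
    apply ContinuousOn.div (by fun_prop)
    · apply Continuous.continuousOn
      exact continuous_const.mul (Real.continuous_sqrt.comp (by continuity))
    · intro x _
      have hxm : (0:ℝ) < x^2 + m := by positivity
      have := Real.sqrt_pos.2 hxm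
      exact ne_of_gt (by linarith)

set_option maxHeartbeats 1000000 in
theorem cauchy_transform_fT (m z : ℝ) (hm : 1 < m) (hz : 2 * m / (m - 1) < z) :
    ∫ x : ℝ, fTDensity m x / (z - x)
      = ((m + 1) * z - Real.sqrt ((m - 1) ^ 2 * z ^ 2 - 4 * m ^ 2)) / (2 * (m + z ^ 2)) := by
  have hm0 : (0:ℝ) < m := by linarith
  have hm1 : (0:ℝ) < m - 1 := by linarith
  have ha : 0 < (m-1)/m := div_pos hm1 hm0
  have hL0 : 0 < 2*m/(m-1) := by positivity
  have haL : (m-1)/m * (2*m/(m-1)) = 2 := by field_simp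
  have haz : 2 < (m-1)/m*z := by
    have h := mul_lt_mul_of_pos_left hz ha
    rw [haL] at h; exact h
  have hsm : (0:ℝ) < Real.sqrt m := Real.sqrt_pos.2 hm0
  have hsm2 : Real.sqrt m * Real.sqrt m = m := Real.mul_self_sqrt hm0.le
  have hB0 : 0 < (m+1)/Real.sqrt m := by positivity
  have hB2 : ((m+1)/Real.sqrt m)^2 = (m+1)^2/m := by
    rw [div_pow, Real.sq_sqrt hm0.le]
  have h1m : 1 < Real.sqrt m := by
    rw [show (1:ℝ) = Real.sqrt 1 by simp]
    exact Real.sqrt_lt_sqrt (by norm_num) hm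
  have hBgt : 2 < (m+1)/Real.sqrt m := by
    rw [lt_div_iff₀ hsm]
    nlinarith [mul_pos (sub_pos.2 h1m) (sub_pos.2 h1m), hsm2]
  have hle : -(2*m/(m-1)) ≤ 2*m/(m-1) := by linarith
  -- Step 1: reduce to a set integral over the Icc
  have step1 : (∫ x : ℝ, fTDensity m x / (z - x))
      = ∫ x in Set.Icc (-(2*m/(m-1))) (2*m/(m-1)),
          Real.sqrt (4 - ((m-1)/m)^2*x^2)/(2*π*(1+x^2/m))/(z-x) := by
    rw [← MeasureTheory.integral_indicator measurableSet_Icc]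
    congr 1
    funext x
    unfold fTDensity
    by_cases hx : x ∈ Set.Icc (-(2*m/(m-1))) (2*m/(m-1))
    · rw [Set.indicator_of_mem hx, Set.indicator_of_mem hx]
    · rw [Set.indicator_of_notMem hx, Set.indicator_of_notMem hx, zero_div]
  -- Step 2: convert to an interval integral
  have step2 : (∫ x in Set.Icc (-(2*m/(m-1))) (2*m/(m-1)),
          Real.sqrt (4 - ((m-1)/m)^2*x^2)/(2*π*(1+x^2/m))/(z-x))
      = ∫ x in (-(2*m/(m-1)))..(2*m/(m-1)),
          Real.sqrt (4 - ((m-1)/m)^2*x^2)/(2*π*(1+x^2/m))/(z-x) := by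
    rw [intervalIntegral.integral_of_le hle, ← MeasureTheory.integral_Icc_eq_integral_Ioc]
  -- Step 3: fundamental theorem of calculus
  have hcont := fTAnti_continuousOn m z ((m-1)/m) ((m+1)/Real.sqrt m) (2*m/(m-1)) hm ha hBgt hz
  have hderiv : ∀ x ∈ Set.Ioo (-(2*m/(m-1))) (2*m/(m-1)),
      HasDerivWithinAt (fTAnti m z ((m-1)/m) ((m+1)/Real.sqrt m))
        (Real.sqrt (4 - ((m-1)/m)^2*x^2)/(2*π*(1+x^2/m))/(z-x)) (Set.Ioi x) x := by
    intro x hx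
    have hzx : 0 < z - x := by linarith [hx.2]
    have h1 : (m-1)/m * x < 2 := by
      have := mul_lt_mul_of_pos_left hx.2 ha; rw [haL] at this; exact this
    have h2 : -2 < (m-1)/m * x := by
      have := mul_lt_mul_of_pos_left hx.1 ha; rw [mul_neg, haL] at this; exact this
    have hx4 : 0 < 4 - ((m-1)/m)^2*x^2 := by nlinarith
    exact (fTAnti_hasDerivAt m z ((m-1)/m) ((m+1)/Real.sqrt m) x hm rfl rfl hzx hx4
      haz).hasDerivWithinAt
  have hintg : IntervalIntegrable
      (fun x => Real.sqrt (4 - ((m-1)/m)^2*x^2)/(2*π*(1+x^2/m))/(z-x))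
      volume (-(2*m/(m-1))) (2*m/(m-1)) := by
    apply ContinuousOn.intervalIntegrable
    rw [Set.uIcc_of_le hle]
    apply ContinuousOn.div
    · apply Continuous.continuousOn
      apply Continuous.div (Real.continuous_sqrt.comp (by continuity)) (by continuity)
      intro x
      have h1x : (0:ℝ) < 1 + x^2/m := by positivity
      positivity
    · fun_prop
    · intro x hx
      have : 0 < z - x := by linarith [hx.2]
      exact ne_of_gt this
  have step3 := intervalIntegral.integral_eq_sub_of_hasDeriv_right_of_le hle hcont hderiv hintg
  -- Step 4: boundary values
  have hBL : (2*m/(m-1))^2 + m = ((m+1)/Real.sqrt m*(2*m/(m-1))/2)^2 := by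
    have e : ((m+1)/Real.sqrt m*(2*m/(m-1))/2)^2
        = ((m+1)/Real.sqrt m)^2*(2*m/(m-1))^2/4 := by ring
    rw [e, hB2]
    field_simp
    ring
  have step4 := fTAnti_boundary m z ((m-1)/m) ((m+1)/Real.sqrt m) (2*m/(m-1)) hm ha hB0
    haL hL0 hz hBL
  -- Step 5: final arithmetic
  have hDval : Real.sqrt ((m-1)^2*z^2 - 4*m^2) = m * Real.sqrt (((m-1)/m)^2*z^2-4) := by
    rw [show (m-1)^2*z^2 - 4*m^2 = m^2*(((m-1)/m)^2*z^2-4) by field_simp,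
      Real.sqrt_mul (sq_nonneg m), Real.sqrt_sq hm0.le]
  rw [step1, step2, step3, step4, hDval]
  have hpi : π ≠ 0 := Real.pi_ne_zero
  have hmz : (0:ℝ) < m + z^2 := by positivity
  field_simp
  rw [Real.sq_sqrt hm0.le]
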